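/- arXiv:1306.5465 — 6 statements merged into one kernel-verified Lean document; each statement's English description precedes it below -/
import Mathlib

section
/- Let G be a finite, connected graph and let v ∈ Λ be an equilibrium. Then the Jacobian matrix JF(v) has an eigenvalue with strictly positive real part if and only if there exists a coordinate i ∈ [m] with v_i = 0 and (∂L/∂v_i)(v) > 0. -/
open MeasureTheory Filter Finset Topology

noncomputable section

namespace GPU

variable {m : ℕ}

/-- The vector field `F` of the ODE associated to the generalized Pólya urn,
`F_i(x) = -x_i + (1/N) ∑_{j ~ i} x_i/(x_i+x_j)` where `N` is the number of edges. -/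
def polyaF (G : SimpleGraph (Fin m)) [DecidableRel G.Adj] (x : Fin m → ℝ) : Fin m → ℝ :=
  fun i => -x i + (1 / (G.edgeFinset.card : ℝ)) * ∑ j ∈ G.neighborFinset i, x i / (x i + x j)

/-- The domain `Δ`. -/
def simplexDelta (G : SimpleGraph (Fin m)) (c : ℝ) : Set (Fin m → ℝ) :=
  {x | (∀ i, 0 ≤ x i) ∧ ∑ i, x i = 1 ∧ ∀ i j, G.Adj i j → c ≤ x i + x j}

/-- The equilibria set `Λ = {x ∈ Δ : F(x) = 0}`. -/
def equilibria (G : SimpleGraph (Fin m)) [DecidableRel G.Adj] (c : ℝ) : Set (Fin m → ℝ) :=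
  {x | x ∈ simplexDelta G c ∧ polyaF G x = 0}

/-- The Lyapunov function `L(v) = -∑ v_i + (1/N) ∑_{{i,j} ∈ E} log (v_i + v_j)`. -/
def polyaL (G : SimpleGraph (Fin m)) [DecidableRel G.Adj] (v : Fin m → ℝ) : ℝ :=
  -∑ i, v i + (1 / (G.edgeFinset.card : ℝ)) *
    ∑ e ∈ G.edgeFinset,
      Sym2.lift ⟨fun i j => Real.log (v i + v j), fun i j => by simp [add_comm]⟩ e

/-- The partial derivative `∂L/∂v_i = -1 + (1/N) ∑_{j ~ i} 1/(v_i+v_j)`. -/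
def partialL (G : SimpleGraph (Fin m)) [DecidableRel G.Adj] (v : Fin m → ℝ) (i : Fin m) : ℝ :=
  -1 + (1 / (G.edgeFinset.card : ℝ)) * ∑ j ∈ G.neighborFinset i, 1 / (v i + v j)

/-- The Jacobian matrix `JF(v)` of `F` at `v`. -/
def polyaJacobian (G : SimpleGraph (Fin m)) [DecidableRel G.Adj] (v : Fin m → ℝ) :
    Matrix (Fin m) (Fin m) ℝ :=
  Matrix.of fun i j => fderiv ℝ (fun x => polyaF G x i) v (Pi.single j 1)

/-- A point is unstable if its Jacobian matrix has an eigenvalue with strictly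
positive real part. -/
def Unstable (G : SimpleGraph (Fin m)) [DecidableRel G.Adj] (v : Fin m → ℝ) : Prop :=
  ∃ z : ℂ, z ∈ spectrum ℂ ((polyaJacobian G v).map Complex.ofReal) ∧ 0 < z.re

/-- `G` is balanced-bipartite if it admits a bipartition `V = A ∪ Aᶜ` with `#A = #Aᶜ`. -/
def BalancedBipartite (G : SimpleGraph (Fin m)) : Prop :=
  ∃ A : Finset (Fin m), (∀ i j, G.Adj i j → (i ∈ A ↔ j ∉ A)) ∧ A.card = Aᶜ.card

/-- The generalized Pólya urn process on `G`: at each step, for each edge `{i,j}` one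
ball is added either to bin `i` or to bin `j`; conditionally on the past the ball goes
to `i` with probability `B_i(n)/(B_i(n)+B_j(n))` and the choices for distinct edges are
conditionally independent (encoded by the product form of `condLaw`). -/
structure PolyaUrn (G : SimpleGraph (Fin m)) [DecidableRel G.Adj]
    (Ω : Type) [mΩ : MeasurableSpace Ω] (μ : Measure Ω) where
  /-- initial number of balls in each bin -/
  B₀ : Fin m → ℕ
  B₀_pos : ∀ i, 1 ≤ B₀ i
  /-- the filtration of the process -/
  ℱ : Filtration ℕ mΩ
  /-- `δ (n+1) i j` is the indicator that the ball added on edge `{i,j}` at step `n+1`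
  goes to bin `i` -/
  δ : ℕ → Fin m → Fin m → Ω → ℕ
  /-- number of balls in each bin after step `n` -/
  B : ℕ → Ω → Fin m → ℕ
  B_init : ∀ ω i, B 0 ω i = B₀ i
  B_step : ∀ n ω i, B (n + 1) ω i = B n ω i + ∑ j ∈ G.neighborFinset i, δ (n + 1) i j ω
  δ_sum : ∀ n i j ω, G.Adj i j → δ (n + 1) i j ω + δ (n + 1) j i ω = 1
  B_meas : ∀ n i, Measurable[ℱ n] fun ω => B n ω i
  δ_meas : ∀ n i j, Measurable[ℱ (n + 1)] fun ω => δ (n + 1) i j ω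
  condLaw : ∀ n (s : Fin m → Fin m → ℕ),
    (μ[Set.indicator {ω | ∀ i j, G.Adj i j → i < j → δ (n + 1) i j ω = s i j}
        (fun _ => (1 : ℝ)) | ℱ n])
      =ᵐ[μ] fun ω => ∏ i, ∏ j ∈ (G.neighborFinset i).filter (fun j => i < j),
        (if s i j = 1 then (B n ω i : ℝ) / ((B n ω i : ℝ) + (B n ω j : ℝ))
         else if s i j = 0 then (B n ω j : ℝ) / ((B n ω i : ℝ) + (B n ω j : ℝ)) else 0)

/-- The proportion of balls in each bin, `x_i(n) = B_i(n)/(N₀ + nN)`. -/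
def PolyaUrn.x {G : SimpleGraph (Fin m)} [DecidableRel G.Adj] {Ω : Type}
    [mΩ : MeasurableSpace Ω] {μ : Measure Ω} (U : PolyaUrn G Ω μ) (n : ℕ) (ω : Ω) :
    Fin m → ℝ :=
  fun i => (U.B n ω i : ℝ) / ((∑ j, U.B₀ j + n * G.edgeFinset.card : ℕ) : ℝ)

end GPU

/-!
At an equilibrium `F_i = v_i · ∂L/∂v_i` vanishes, so `∂L/∂v_i (v) = 0` wherever `v_i ≠ 0`.
Differentiating `F_i(x) = x_i · ∂L/∂x_i (x)` gives `JF(v) = diag(∂L(v)) - diag(v) · Q`, where `Q`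
is the signless Laplacian of `G` with edge weights `1 / (N (v_i + v_j)²)`, a positive semidefinite
matrix. If `v_i = 0`, row `i` of `JF(v)` is `∂L/∂v_i (v) · eᵢ`, so `∂L/∂v_i (v)` is an eigenvalue.
Conversely, let `JF(v) u = z u` with `u ≠ 0`. Either `u_i ≠ 0` for some `i` with `v_i = 0`, and
then `z = ∂L/∂v_i (v)`, or `u` vanishes where `v` does; pairing the eigen-equation with `u_i / v_i`
then gives `z · ∑ |u_i|² / v_i = -⟨u, Q u⟩ ≤ 0`, so `Re z ≤ 0`.
-/

namespace GPU

open Matrix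
open scoped ComplexOrder

section Spectrum

variable {ι K : Type*} [Fintype ι] [DecidableEq ι] [Field K]

theorem exists_mulVec_eq_smul_of_mem_spectrum {M : Matrix ι ι K} {μ : K}
    (h : μ ∈ spectrum K M) : ∃ u ≠ 0, M *ᵥ u = μ • u := by
  rw [← spectrum_toLin', ← Module.End.hasEigenvalue_iff_mem_spectrum] at h
  obtain ⟨u, hu, hu0⟩ := h.exists_hasEigenvector
  exact ⟨u, hu0, Module.End.mem_eigenspace_iff.mp hu⟩

theorem mem_spectrum_of_row_eq_single {M : Matrix ι ι K} {i : ι} {μ : K}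
    (h : M i = Pi.single i μ) : μ ∈ spectrum K M := by
  rw [spectrum.mem_iff, isUnit_iff_isUnit_det, det_eq_zero_of_row_eq_zero i]
  · exact not_isUnit_zero
  · intro k
    simp [h, algebraMap_matrix_apply, Pi.single_apply, eq_comm]

theorem mem_spectrum_diagonal_sub_diagonal_mul {d a : ι → K} (Q : Matrix ι ι K) {i : ι}
    (hai : a i = 0) : d i ∈ spectrum K (diagonal d - diagonal a * Q) := by
  refine mem_spectrum_of_row_eq_single (i := i) (funext fun k => ?_)
  simp [diagonal_mul, hai, diagonal_apply, Pi.single_apply, eq_comm]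

theorem exists_eq_of_mem_spectrum_diagonal_sub_diagonal_mul {d a : ι → ℝ} {Q : Matrix ι ι ℂ}
    (ha : 0 ≤ a) (hda : ∀ i, a i ≠ 0 → d i = 0) (hQ : Q.PosSemidef) {z : ℂ}
    (hz : z ∈ spectrum ℂ (diagonal (fun i => (d i : ℂ)) - diagonal (fun i => (a i : ℂ)) * Q))
    (hre : 0 < z.re) : ∃ i, a i = 0 ∧ z = d i := by
  obtain ⟨u, hu0, hMu⟩ := exists_mulVec_eq_smul_of_mem_spectrum hz
  have hrow : ∀ i, z * u i = d i * u i - a i * (Q *ᵥ u) i := fun i => by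
    simpa [sub_mulVec, ← mulVec_mulVec, mulVec_diagonal] using (congrFun hMu i).symm
  by_contra! hne
  have hsupp : ∀ i, a i = 0 → u i = 0 := fun i hai => by
    by_contra hui
    exact hne i hai (mul_right_cancel₀ hui (by simpa [hai] using hrow i))
  have hp : 0 < ∑ i, Complex.normSq (u i) / a i := by
    obtain ⟨i, hui⟩ := Function.ne_iff.mp hu0
    have hai : 0 < a i := (ha i).lt_of_ne' fun hai => hui (hsupp i hai)
    exact Finset.sum_pos' (fun j _ => div_nonneg (Complex.normSq_nonneg _) (ha j))
      ⟨i, Finset.mem_univ _, div_pos (Complex.normSq_pos.mpr hui) hai⟩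
  have hkey : z * ((∑ i, Complex.normSq (u i) / a i : ℝ) : ℂ) = -(star u ⬝ᵥ (Q *ᵥ u)) := by
    simp only [dotProduct, Complex.ofReal_sum, Finset.mul_sum, ← Finset.sum_neg_distrib]
    refine Finset.sum_congr rfl fun i _ => ?_
    by_cases hai : a i = 0
    · simp [hai, hsupp i hai]
    · have hi := hrow i
      rw [hda i hai, Complex.ofReal_zero, zero_mul, zero_sub] at hi
      rw [Complex.ofReal_div, Complex.normSq_eq_conj_mul_self]
      simp only [Pi.star_apply, Complex.star_def]
      field_simp
      linear_combination (starRingEnd ℂ) (u i) * hi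
  have hQu := (Complex.nonneg_iff.mp (hQ.dotProduct_mulVec_nonneg u)).1
  have hre' := congrArg Complex.re hkey
  simp only [Complex.re_mul_ofReal, Complex.neg_re] at hre'
  nlinarith [mul_pos hre hp]

end Spectrum

section SignlessLaplacian

variable {V R : Type*} [Fintype V] (G : SimpleGraph V) [DecidableRel G.Adj]

theorem sum_sum_neighborFinset_comm {M : Type*} [AddCommMonoid M] (f : V → V → M) :
    ∑ i, ∑ j ∈ G.neighborFinset i, f i j = ∑ i, ∑ j ∈ G.neighborFinset i, f j i := by
  simp only [SimpleGraph.neighborFinset_eq_filter, Finset.sum_filter]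
  rw [Finset.sum_comm]
  simp only [G.adj_comm]

variable [DecidableEq V]

def weightedSignlessLapMatrix [AddCommMonoid R] (w : V → V → R) : Matrix V V R :=
  diagonal (fun i => ∑ j ∈ G.neighborFinset i, w i j) + of fun i k => if G.Adj i k then w i k else 0

theorem weightedSignlessLapMatrix_mulVec_apply [NonUnitalNonAssocSemiring R] (w : V → V → R)
    (u : V → R) (i : V) :
    (weightedSignlessLapMatrix G w *ᵥ u) i = ∑ j ∈ G.neighborFinset i, w i j * (u i + u j) := by
  rw [weightedSignlessLapMatrix, add_mulVec, Pi.add_apply, mulVec_diagonal]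
  simp only [mul_add, Finset.sum_add_distrib, Finset.sum_mul]
  congr 1
  simp [mulVec, dotProduct, ite_mul, SimpleGraph.neighborFinset_eq_filter, Finset.sum_filter]

theorem weightedSignlessLapMatrix_map {S : Type*} [Semiring R] [Semiring S] (f : R →+* S)
    (w : V → V → R) :
    (weightedSignlessLapMatrix G w).map f = weightedSignlessLapMatrix G fun i j => f (w i j) := by
  ext i k
  simp [weightedSignlessLapMatrix, diagonal_apply, apply_ite f]

theorem two_mul_dotProduct_weightedSignlessLapMatrix_mulVec {w : V → V → ℂ}
    (hsymm : ∀ i j, w i j = w j i) (u : V → ℂ) :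
    2 * (star u ⬝ᵥ (weightedSignlessLapMatrix G w *ᵥ u)) =
      ∑ i, ∑ j ∈ G.neighborFinset i, w i j * (star (u i + u j) * (u i + u j)) := by
  have hsum : star u ⬝ᵥ (weightedSignlessLapMatrix G w *ᵥ u) =
      ∑ i, ∑ j ∈ G.neighborFinset i, star (u i) * (w i j * (u i + u j)) := by
    simp only [dotProduct, weightedSignlessLapMatrix_mulVec_apply, Finset.mul_sum, Pi.star_apply]
  rw [two_mul, hsum]
  conv_lhs => arg 2; rw [sum_sum_neighborFinset_comm]
  rw [← Finset.sum_add_distrib]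
  refine Finset.sum_congr rfl fun i _ => ?_
  rw [← Finset.sum_add_distrib]
  refine Finset.sum_congr rfl fun j _ => ?_
  rw [hsymm j i, star_add]
  ring

theorem posSemidef_weightedSignlessLapMatrix {w : V → V → ℂ} (hw : ∀ i j, 0 ≤ w i j)
    (hsymm : ∀ i j, w i j = w j i) : (weightedSignlessLapMatrix G w).PosSemidef := by
  have hreal : ∀ i j, star (w i j) = w i j := fun i j => (IsSelfAdjoint.of_nonneg (hw i j)).star_eq
  refine .of_dotProduct_mulVec_nonneg (IsHermitian.ext fun i k => ?_) fun u => ?_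
  · by_cases hik : i = k
    · subst hik
      simp [weightedSignlessLapMatrix, star_sum, hreal]
    · simp [weightedSignlessLapMatrix, Ne.symm hik, hik, G.adj_comm k i, hsymm k i, apply_ite star,
        hreal]
  · have h2 := two_mul_dotProduct_weightedSignlessLapMatrix_mulVec G hsymm u
    have : 0 ≤ 2 * (star u ⬝ᵥ (weightedSignlessLapMatrix G w *ᵥ u)) := by
      rw [h2]
      exact Finset.sum_nonneg fun i _ => Finset.sum_nonneg fun j _ =>
        mul_nonneg (hw i j) (star_mul_self_nonneg _)
    exact le_of_mul_le_mul_left (by simpa using this) two_pos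

end SignlessLaplacian

section Jacobian

variable {m : ℕ} (G : SimpleGraph (Fin m)) [DecidableRel G.Adj]

theorem polyaF_apply (x : Fin m → ℝ) (i : Fin m) : polyaF G x i = x i * partialL G x i := by
  rw [polyaF, partialL, mul_add, mul_neg_one, Finset.mul_sum, Finset.mul_sum, Finset.mul_sum]
  exact congrArg _ (Finset.sum_congr rfl fun j _ => by ring)

theorem partialL_eq_zero_of_polyaF_eq_zero {v : Fin m → ℝ} (hF : polyaF G v = 0) {i : Fin m}
    (hi : v i ≠ 0) : partialL G v i = 0 :=
  (mul_eq_zero.mp ((polyaF_apply G v i).symm.trans (congrFun hF i))).resolve_left hi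

def polyaWeight (v : Fin m → ℝ) (i j : Fin m) : ℝ :=
  1 / (G.edgeFinset.card : ℝ) / (v i + v j) ^ 2

theorem hasFDerivAt_partialL {v : Fin m → ℝ} {i : Fin m} (hv : ∀ j, G.Adj i j → v i + v j ≠ 0) :
    HasFDerivAt (fun x => partialL G x i)
      (-∑ j ∈ G.neighborFinset i, polyaWeight G v i j •
        (ContinuousLinearMap.proj (R := ℝ) (φ := fun _ : Fin m => ℝ) i +
          ContinuousLinearMap.proj j)) v := by
  have hterm : ∀ j ∈ G.neighborFinset i,
      HasFDerivAt (fun x : Fin m → ℝ => 1 / (x i + x j)) (-((v i + v j) ^ 2)⁻¹ •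
        (ContinuousLinearMap.proj (R := ℝ) (φ := fun _ : Fin m => ℝ) i +
          ContinuousLinearMap.proj j)) v := fun j hj => by
    simp only [one_div]
    exact (hasDerivAt_inv (hv j ((G.mem_neighborFinset i j).mp hj))).comp_hasFDerivAt v
      ((hasFDerivAt_apply i v).fun_add (hasFDerivAt_apply j v))
  refine (((HasFDerivAt.fun_sum hterm).const_mul (1 / (G.edgeFinset.card : ℝ))).const_add
    (-1)).congr_fderiv ?_
  ext u
  simp only [div_eq_mul_inv, one_mul, smul_add, neg_smul, _root_.smul_apply, _root_.sum_apply,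
    _root_.add_apply, _root_.neg_apply, ContinuousLinearMap.proj_apply, smul_eq_mul,
    Finset.mul_sum, polyaWeight]
  rw [← Finset.sum_neg_distrib]
  exact Finset.sum_congr rfl fun j _ => by ring

theorem polyaJacobian_eq {v : Fin m → ℝ} (hv : ∀ i j, G.Adj i j → v i + v j ≠ 0) :
    polyaJacobian G v =
      diagonal (partialL G v) - diagonal v * weightedSignlessLapMatrix G (polyaWeight G v) := by
  ext i k
  have hF := (hasFDerivAt_apply i v).fun_mul (hasFDerivAt_partialL G (hv i))
  rw [← funext fun x => polyaF_apply G x i] at hF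
  have hQ : weightedSignlessLapMatrix G (polyaWeight G v) i k =
      (weightedSignlessLapMatrix G (polyaWeight G v) *ᵥ Pi.single k 1) i := by
    rw [mulVec_single_one]; rfl
  rw [polyaJacobian, of_apply, hF.fderiv, Matrix.sub_apply, diagonal_mul, hQ,
    weightedSignlessLapMatrix_mulVec_apply]
  simp only [smul_add, smul_neg, _root_.add_apply, _root_.neg_apply, _root_.smul_apply,
    _root_.sum_apply, ContinuousLinearMap.proj_apply, Pi.single_apply, smul_eq_mul, mul_ite,
    mul_one, mul_zero, diagonal_apply, mul_add]
  ring

theorem polyaJacobian_map_ofReal {v : Fin m → ℝ} (hv : ∀ i j, G.Adj i j → v i + v j ≠ 0) :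
    (polyaJacobian G v).map Complex.ofReal =
      diagonal (fun i => (partialL G v i : ℂ)) - diagonal (fun i => (v i : ℂ)) *
        weightedSignlessLapMatrix G (fun i j => (polyaWeight G v i j : ℂ)) := by
  rw [polyaJacobian_eq G hv]
  change Complex.ofRealHom.mapMatrix _ = _
  rw [map_sub, map_mul]
  simp only [RingHom.mapMatrix_apply, diagonal_map (map_zero _), weightedSignlessLapMatrix_map,
    Complex.ofRealHom_eq_coe]

end Jacobian

theorem unstable_iff_exists_zero_coord_pos_partialL_general
    (m : ℕ) (G : SimpleGraph (Fin m)) [DecidableRel G.Adj]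
    (c : ℝ) (hc0 : 0 < c)
    (v : Fin m → ℝ) (hv : v ∈ equilibria G c) :
    Unstable G v ↔ ∃ i : Fin m, v i = 0 ∧ 0 < partialL G v i := by
  obtain ⟨⟨hv0, -, hedge⟩, hF⟩ := hv
  have hJ := polyaJacobian_map_ofReal G fun i j hij => (hc0.trans_le (hedge i j hij)).ne'
  have hQ : (weightedSignlessLapMatrix G fun i j => (polyaWeight G v i j : ℂ)).PosSemidef :=
    posSemidef_weightedSignlessLapMatrix G
      (fun i j => Complex.zero_le_real.mpr (by unfold polyaWeight; positivity))
      (fun i j => by rw [polyaWeight, polyaWeight, add_comm])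
  rw [Unstable, hJ]
  constructor
  · rintro ⟨z, hz, hre⟩
    obtain ⟨i, hvi, rfl⟩ := exists_eq_of_mem_spectrum_diagonal_sub_diagonal_mul hv0
      (fun i => partialL_eq_zero_of_polyaF_eq_zero G hF) hQ hz hre
    exact ⟨i, hvi, by simpa using hre⟩
  · rintro ⟨i, hvi, hpos⟩
    exact ⟨_, mem_spectrum_diagonal_sub_diagonal_mul (i := i) _ (by simp [hvi]),
      by simpa using hpos⟩

/-- An equilibrium `v ∈ Λ` has a Jacobian eigenvalue with strictly
positive real part if and only if some coordinate `i` has `v_i = 0` and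
`∂L/∂v_i(v) > 0`. -/
theorem unstable_iff_exists_zero_coord_pos_partialL
    (m : ℕ) (G : SimpleGraph (Fin m)) [DecidableRel G.Adj] (hconn : G.Connected)
    (c : ℝ) (hc0 : 0 < c) (hc1 : c < 1 / (G.edgeFinset.card : ℝ))
    (v : Fin m → ℝ) (hv : v ∈ equilibria G c) :
    Unstable G v ↔ ∃ i : Fin m, v i = 0 ∧ 0 < partialL G v i :=
  unstable_iff_exists_zero_coord_pos_partialL_general m G c hc0 v hv

end GPU
end
end

section
/- Let G be a finite, connected graph that is not balanced-bipartite, and let w ∈ Δ with w_i ≥ 0. Then the function f(v_1,…,v_m) = Σ_{{i,j}∈E} (w_i+w_j)/(v_i+v_j) is strictly convex on Δ: for all u, v ∈ Δ with u ≠ v and all t ∈ (0,1), f(tu+(1−t)v) < t f(u) + (1−t) f(v). -/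
open MeasureTheory Filter Finset Topology

noncomputable section

namespace GPU

/-- `f(v) = ∑_{{i,j} ∈ E} (w_i + w_j)/(v_i + v_j)`. -/
def edgeRatioSum (G : SimpleGraph (Fin m)) [DecidableRel G.Adj]
    (w v : Fin m → ℝ) : ℝ :=
  ∑ e ∈ G.edgeFinset,
    Sym2.lift ⟨fun i j => (w i + w j) / (v i + v j), fun i j => by simp [add_comm]⟩ e

lemma aux_div_le (a x y t : ℝ) (ha : 0 ≤ a) (hx : 0 < x) (hy : 0 < y)
    (ht0 : 0 < t) (ht1 : t < 1) :
    a / (t * x + (1 - t) * y) ≤ t * (a / x) + (1 - t) * (a / y) := by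
  have h1t : 0 < 1 - t := by linarith
  have hs : 0 < t * x + (1 - t) * y := by positivity
  have hxy : 0 < x * y := mul_pos hx hy
  have hrhs : t * (a / x) + (1 - t) * (a / y) = (t * y + (1 - t) * x) * a / (x * y) := by
    field_simp
  rw [hrhs, div_le_div_iff₀ hs hxy]
  nlinarith [mul_nonneg (mul_nonneg ha (mul_pos ht0 h1t).le) (sq_nonneg (x - y))]

lemma aux_div_lt (a x y t : ℝ) (ha : 0 < a) (hx : 0 < x) (hy : 0 < y)
    (hxy : x ≠ y) (ht0 : 0 < t) (ht1 : t < 1) :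
    a / (t * x + (1 - t) * y) < t * (a / x) + (1 - t) * (a / y) := by
  have h1t : 0 < 1 - t := by linarith
  have hs : 0 < t * x + (1 - t) * y := by positivity
  have hxyp : 0 < x * y := mul_pos hx hy
  have hrhs : t * (a / x) + (1 - t) * (a / y) = (t * y + (1 - t) * x) * a / (x * y) := by
    field_simp
  have hsq : 0 < (x - y) ^ 2 := by
    have : x - y ≠ 0 := sub_ne_zero.mpr hxy
    positivity
  rw [hrhs, div_lt_div_iff₀ hs hxyp]
  nlinarith [mul_pos (mul_pos ha (mul_pos ht0 h1t)) hsq]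

lemma exists_edge_sum_ne (G : SimpleGraph (Fin m)) [DecidableRel G.Adj]
    (hconn : G.Connected) (hnbb : ¬ BalancedBipartite G)
    (u v : Fin m → ℝ) (hu : ∑ i, u i = 1) (hv : ∑ i, v i = 1) (huv : u ≠ v) :
    ∃ i j, G.Adj i j ∧ u i + u j ≠ v i + v j := by
  by_contra hne
  push_neg at hne
  set d : Fin m → ℝ := fun i => u i - v i with hd_def
  have hd : ∀ i j, G.Adj i j → d j = -d i := by
    intro i j hij
    have := hne i j hij
    simp only [hd_def]
    linarith
  have hwalk : ∀ x k : Fin m, G.Walk x k → d k = d x ∨ d k = -d x := by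
    intro x k p
    induction p with
    | nil => left; rfl
    | cons h p ih =>
      rcases ih with h' | h' <;> rw [h', hd _ _ h] <;> simp
  have hne' : Nonempty (Fin m) := hconn.nonempty
  obtain ⟨i0⟩ := hne'
  set a := d i0 with ha_def
  have hval : ∀ k, d k = a ∨ d k = -a := by
    intro k
    obtain ⟨p⟩ := hconn.preconnected i0 k
    exact hwalk i0 k p
  by_cases ha : a = 0
  · apply huv
    funext k
    have := hval k
    rw [ha] at this
    simp only [neg_zero, or_self] at this
    have : u k - v k = 0 := this
    linarith
  · apply hnbb
    refine ⟨Finset.univ.filter (fun i => d i = a), ?_, ?_⟩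
    · intro i j hij
      simp only [Finset.mem_filter, Finset.mem_univ, true_and]
      constructor
      · intro hi hj
        rw [hd i j hij, hi] at hj
        exact ha (by linarith)
      · intro hj
        rcases hval j with h' | h'
        · exact absurd h' hj
        · have := hd j i hij.symm
          rw [h'] at this
          rw [this]; ring
    · have hsum : ∑ i, d i = 0 := by
        simp only [hd_def, Finset.sum_sub_distrib, hu, hv, sub_self]
      set A := Finset.univ.filter (fun i => d i = a) with hA
      have h1 : ∑ i ∈ A, d i = A.card • a := by
        apply Finset.sum_eq_card_nsmul
        intro i hi
        exact (Finset.mem_filter.mp hi).2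
      have h2 : ∑ i ∈ Aᶜ, d i = Aᶜ.card • (-a) := by
        apply Finset.sum_eq_card_nsmul
        intro i hi
        have hi' : d i ≠ a := by
          simp only [hA, Finset.mem_compl, Finset.mem_filter, Finset.mem_univ,
            true_and] at hi
          exact hi
        rcases hval i with h' | h'
        · exact absurd h' hi'
        · exact h'
      have := Finset.sum_add_sum_compl A d
      rw [h1, h2, hsum] at this
      simp only [nsmul_eq_mul, mul_neg] at this
      have hcard : (A.card : ℝ) = (Aᶜ.card : ℝ) := by
        have hz : a * ((A.card : ℝ) - (Aᶜ.card : ℝ)) = 0 := by linear_combination this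
        rcases mul_eq_zero.mp hz with h | h
        · exact absurd h ha
        · linarith
      exact_mod_cast hcard

/-- If `G` is finite, connected and not balanced-bipartite and
`w ∈ Δ`, then `f(v) = ∑_{{i,j} ∈ E} (w_i+w_j)/(v_i+v_j)` is strictly convex on `Δ`. -/
theorem edgeRatioSum_strictConvexOn
    (m : ℕ) (G : SimpleGraph (Fin m)) [DecidableRel G.Adj]
    (hconn : G.Connected) (hnbb : ¬ BalancedBipartite G)
    (c : ℝ) (hc0 : 0 < c) (hc1 : c < 1 / (G.edgeFinset.card : ℝ))
    (w : Fin m → ℝ) (hw : w ∈ simplexDelta G c) :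
    ∀ u ∈ simplexDelta G c, ∀ v ∈ simplexDelta G c, u ≠ v →
      ∀ t : ℝ, 0 < t → t < 1 →
        edgeRatioSum G w (t • u + (1 - t) • v) <
          t * edgeRatioSum G w u + (1 - t) * edgeRatioSum G w v := by
  intro u hu v hv huv t ht0 ht1
  obtain ⟨hu0, hu1, hue⟩ := hu
  obtain ⟨hv0, hv1, hve⟩ := hv
  obtain ⟨hw0, hw1, hwe⟩ := hw
  obtain ⟨i0, j0, hadj0, hne0⟩ :=
    exists_edge_sum_ne G hconn hnbb u v hu1 hv1 huv
  unfold edgeRatioSum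
  rw [Finset.mul_sum, Finset.mul_sum, ← Finset.sum_add_distrib]
  apply Finset.sum_lt_sum
  · intro e he
    induction e using Sym2.ind with
    | _ i j =>
      have hij : G.Adj i j := (SimpleGraph.mem_edgeSet G).mp
        (SimpleGraph.mem_edgeFinset.mp he)
      simp only [Sym2.lift_mk]
      have hz : (t • u + (1 - t) • v) i + (t • u + (1 - t) • v) j
          = t * (u i + u j) + (1 - t) * (v i + v j) := by
        simp [Pi.add_apply, Pi.smul_apply, smul_eq_mul]; ring
      rw [hz]
      exact aux_div_le (w i + w j) (u i + u j) (v i + v j) t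
        (le_trans hc0.le (hwe i j hij)) (lt_of_lt_of_le hc0 (hue i j hij))
        (lt_of_lt_of_le hc0 (hve i j hij)) ht0 ht1
  · refine ⟨s(i0, j0), SimpleGraph.mem_edgeFinset.mpr
      ((SimpleGraph.mem_edgeSet G).mpr hadj0), ?_⟩
    simp only [Sym2.lift_mk]
    have hz : (t • u + (1 - t) • v) i0 + (t • u + (1 - t) • v) j0
        = t * (u i0 + u j0) + (1 - t) * (v i0 + v j0) := by
      simp [Pi.add_apply, Pi.smul_apply, smul_eq_mul]; ring
    rw [hz]
    exact aux_div_lt (w i0 + w j0) (u i0 + u j0) (v i0 + v j0) t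
      (lt_of_lt_of_le hc0 (hwe i0 j0 hadj0)) (lt_of_lt_of_le hc0 (hue i0 j0 hadj0))
      (lt_of_lt_of_le hc0 (hve i0 j0 hadj0)) hne0 ht0 ht1

end GPU
end
end

section
/- Let G be a finite, connected, balanced-bipartite graph with bipartition V=A∪B, #A=#B, and suppose v is an equilibrium of F lying in the interior of Δ (all coordinates strictly positive). Then for every real η with −min_{i∈A} v_i < η < min_{i∈B} v_i, the point u^η defined by u^η_i = v_i + η for i∈A and u^η_i = v_i − η for i∈B is also an interior equilibrium of F. -/
open MeasureTheory Filter Finset Topology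

noncomputable section

namespace GPU

/-- If `G` is a connected balanced-bipartite graph with bipartition
`V = A ∪ Aᶜ`, `#A = #Aᶜ`, and `v` is an interior equilibrium (all coordinates positive),
then for every `η` with `-min_{i ∈ A} v_i < η < min_{i ∉ A} v_i`, the point `u^η` given
by `u^η_i = v_i + η` on `A` and `u^η_i = v_i - η` on `Aᶜ` is also an interior
equilibrium. -/
theorem translate_interior_equilibrium
    (m : ℕ) (G : SimpleGraph (Fin m)) [DecidableRel G.Adj] (hconn : G.Connected)
    (A : Finset (Fin m)) (hbip : ∀ i j, G.Adj i j → (i ∈ A ↔ j ∉ A))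
    (hbal : A.card = Aᶜ.card)
    (c : ℝ) (hc0 : 0 < c) (hc1 : c < 1 / (G.edgeFinset.card : ℝ))
    (v : Fin m → ℝ) (hv : v ∈ equilibria G c) (hvpos : ∀ i, 0 < v i)
    (η : ℝ) (hη₁ : ∀ i ∈ A, -v i < η) (hη₂ : ∀ i ∉ A, η < v i) :
    (fun i => if i ∈ A then v i + η else v i - η) ∈ equilibria G c ∧
    ∀ i : Fin m, 0 < if i ∈ A then v i + η else v i - η := by
  obtain ⟨⟨hnn, hsum, hedgec⟩, hF⟩ := hv
  set u : Fin m → ℝ := fun i => if i ∈ A then v i + η else v i - η with hu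
  have hupos : ∀ i, 0 < u i := by
    intro i
    by_cases h : i ∈ A
    · simp only [hu, h, if_pos]
      linarith [hη₁ i h]
    · simp only [hu, h, if_neg, not_false_iff]
      linarith [hη₂ i h]
  have hedgeeq : ∀ i j, G.Adj i j → u i + u j = v i + v j := by
    intro i j hij
    have hb := hbip i j hij
    by_cases h : i ∈ A
    · have hj : j ∉ A := hb.mp h
      simp only [hu, h, hj, if_pos, if_neg, not_false_iff]; ring
    · have hj : j ∈ A := by by_contra hj; exact h (hb.mpr hj)
      simp only [hu, h, hj, if_pos, if_neg, not_false_iff]; ring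
  refine ⟨⟨⟨fun i => (hupos i).le, ?_, ?_⟩, ?_⟩, hupos⟩
  · have hsplit := Finset.sum_add_sum_compl A u
    have hsplitv := Finset.sum_add_sum_compl A v
    have hA : ∑ i ∈ A, u i = ∑ i ∈ A, v i + A.card • η := by
      rw [Finset.sum_congr rfl (fun i hi => show u i = v i + η by simp [hu, hi]),
        Finset.sum_add_distrib, Finset.sum_const]
    have hAc : ∑ i ∈ Aᶜ, u i = ∑ i ∈ Aᶜ, v i - Aᶜ.card • η := by
      rw [Finset.sum_congr rfl (fun i hi => show u i = v i - η by
          simp [hu, Finset.mem_compl.mp hi]),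
        Finset.sum_sub_distrib, Finset.sum_const]
    rw [← hsplit, hA, hAc, hbal]
    rw [← hsplitv] at hsum
    linarith [hsum]
  · intro i j hij
    rw [hedgeeq i j hij]
    exact hedgec i j hij
  · funext i
    have hFi : polyaF G v i = 0 := congrFun hF i
    have hvne : v i ≠ 0 := (hvpos i).ne'
    have hterm : ∀ j ∈ G.neighborFinset i, u i / (u i + u j) = (u i / v i) * (v i / (v i + v j)) := by
      intro j hj
      have hij : G.Adj i j := (SimpleGraph.mem_neighborFinset G i j).mp hj
      rw [hedgeeq i j hij, div_mul_div_comm, mul_comm (v i) (v i + v j),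
        mul_div_mul_right _ _ hvne]
    have hsum' : ∑ j ∈ G.neighborFinset i, u i / (u i + u j)
        = (u i / v i) * ∑ j ∈ G.neighborFinset i, v i / (v i + v j) := by
      rw [Finset.mul_sum]
      exact Finset.sum_congr rfl hterm
    have : polyaF G u i = (u i / v i) * polyaF G v i := by
      simp only [polyaF, hsum', mul_add, mul_neg, div_mul_cancel₀ _ hvne]
      ring
    simp only [Pi.zero_apply]
    rw [this, hFi, mul_zero]

end GPU
end
end

section
/- Let G be a finite, connected, balanced-bipartite graph with bipartition V=A∪B, #A=#B, and let v and h be two equilibria of F lying in the interior of Δ. Then there exists a real number η such that h_i = v_i + η for every i∈A and h_i = v_i − η for every i∈B. Consequently, the set Λ ∩ int(Δ) of interior equilibria is either empty or an interval of the form {v + η(1_A − 1_B) : −min_{i∈A} v_i < η < min_{i∈B} v_i}. -/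
open MeasureTheory Filter Finset Topology

noncomputable section

namespace GPU

lemma sum_nbr_comm (G : SimpleGraph (Fin m)) [DecidableRel G.Adj] (F : Fin m → Fin m → ℝ) :
    ∑ i, ∑ j ∈ G.neighborFinset i, F i j = ∑ i, ∑ j ∈ G.neighborFinset i, F j i := by
  have key : ∀ (F : Fin m → Fin m → ℝ),
      ∑ i, ∑ j ∈ G.neighborFinset i, F i j
        = ∑ i : Fin m, ∑ j : Fin m, if G.Adj i j then F i j else 0 := by
    intro F
    refine Finset.sum_congr rfl fun i _ => ?_
    rw [SimpleGraph.neighborFinset_eq_filter, Finset.sum_filter]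
  rw [key F, key (fun i j => F j i), Finset.sum_comm]
  refine Finset.sum_congr rfl fun i _ => Finset.sum_congr rfl fun j _ => ?_
  exact if_congr (G.adj_comm j i) rfl rfl

lemma interior_equil_sum (G : SimpleGraph (Fin m)) [DecidableRel G.Adj]
    (hN : (0:ℝ) < (G.edgeFinset.card : ℝ))
    (x : Fin m → ℝ) (hx : polyaF G x = 0) (hxpos : ∀ i, 0 < x i) (i : Fin m) :
    ∑ j ∈ G.neighborFinset i, 1 / (x i + x j) = (G.edgeFinset.card : ℝ) := by
  have h0 := congrFun hx i
  simp only [polyaF, Pi.zero_apply] at h0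
  have hsum : ∑ j ∈ G.neighborFinset i, x i / (x i + x j)
      = x i * ∑ j ∈ G.neighborFinset i, 1 / (x i + x j) := by
    rw [Finset.mul_sum]
    exact Finset.sum_congr rfl fun j _ => by ring
  rw [hsum] at h0
  set S := ∑ j ∈ G.neighborFinset i, 1 / (x i + x j) with hS
  have h1 : x i * ((1 / (G.edgeFinset.card : ℝ)) * S) = x i * 1 := by
    rw [mul_one]; linear_combination h0
  have h2 := mul_left_cancel₀ (hxpos i).ne' h1
  rw [one_div_mul_eq_div, div_eq_one_iff_eq hN.ne'] at h2
  exact h2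

lemma edge_diff_zero (G : SimpleGraph (Fin m)) [DecidableRel G.Adj]
    (hN : (0:ℝ) < (G.edgeFinset.card : ℝ))
    (v h : Fin m → ℝ) (hvF : polyaF G v = 0) (hvpos : ∀ i, 0 < v i)
    (hhF : polyaF G h = 0) (hhpos : ∀ i, 0 < h i)
    {i j : Fin m} (hadj : G.Adj i j) : (h i - v i) + (h j - v j) = 0 := by
  have hvS := interior_equil_sum G hN v hvF hvpos
  have hhS := interior_equil_sum G hN h hhF hhpos
  set a : Fin m → Fin m → ℝ := fun i j => 1/(h i + h j) - 1/(v i + v j) with ha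
  have haswap : ∀ i j, a i j = a j i := by
    intro i j; simp only [ha]; rw [add_comm (h i), add_comm (v i)]
  have hT : ∑ i, ∑ j ∈ G.neighborFinset i, (h i - v i) * a i j = 0 := by
    refine Finset.sum_eq_zero fun i _ => ?_
    rw [← Finset.mul_sum]
    have h3 : ∑ j ∈ G.neighborFinset i, a i j = 0 := by
      simp only [ha]
      rw [Finset.sum_sub_distrib, hhS i, hvS i, sub_self]
    rw [h3, mul_zero]
  have hT' : ∑ i, ∑ j ∈ G.neighborFinset i, (h j - v j) * a i j = 0 := by
    have hsymm := sum_nbr_comm G (fun i j => (h i - v i) * a i j)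
    rw [hsymm] at hT
    rw [← hT]
    exact Finset.sum_congr rfl fun i _ => Finset.sum_congr rfl fun j _ => by
      rw [haswap i j]
  have hsum : ∑ i, ∑ j ∈ G.neighborFinset i,
      ((h i - v i) + (h j - v j)) * a i j = 0 := by
    simp_rw [add_mul, Finset.sum_add_distrib]
    rw [hT, hT', add_zero]
  set Q : Fin m → Fin m → ℝ := fun i j =>
    ((h i + h j) - (v i + v j))^2 / ((h i + h j) * (v i + v j)) with hQdef
  have hkey : ∀ i, ∀ j ∈ G.neighborFinset i,
      Q i j = -(((h i - v i) + (h j - v j)) * a i j) := by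
    intro i j _
    have hH : (0:ℝ) < h i + h j := add_pos (hhpos i) (hhpos j)
    have hV : (0:ℝ) < v i + v j := add_pos (hvpos i) (hvpos j)
    simp only [hQdef, ha]
    field_simp
    ring
  have hQ0 : ∑ i, ∑ j ∈ G.neighborFinset i, Q i j = 0 := by
    have h2 : ∑ i, ∑ j ∈ G.neighborFinset i, Q i j
        = -∑ i, ∑ j ∈ G.neighborFinset i, ((h i - v i) + (h j - v j)) * a i j := by
      rw [← Finset.sum_neg_distrib]
      refine Finset.sum_congr rfl fun i _ => ?_
      rw [← Finset.sum_neg_distrib]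
      exact Finset.sum_congr rfl (hkey i)
    rw [h2, hsum, neg_zero]
  have hQnn : ∀ i (j : Fin m), 0 ≤ Q i j := by
    intro i j
    exact div_nonneg (sq_nonneg _)
      (mul_pos (add_pos (hhpos i) (hhpos j)) (add_pos (hvpos i) (hvpos j))).le
  have houter := (Finset.sum_eq_zero_iff_of_nonneg
    (fun i _ => Finset.sum_nonneg fun j _ => hQnn i j)).mp hQ0 i (Finset.mem_univ i)
  have hinner := (Finset.sum_eq_zero_iff_of_nonneg
    (fun j _ => hQnn i j)).mp houter j ((G.mem_neighborFinset i j).mpr hadj)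
  have hH : (0:ℝ) < h i + h j := add_pos (hhpos i) (hhpos j)
  have hV : (0:ℝ) < v i + v j := add_pos (hvpos i) (hvpos j)
  have hnum : ((h i + h j) - (v i + v j))^2 = 0 := by
    rcases div_eq_zero_iff.mp hinner with h' | h'
    · exact h'
    · exact absurd h' (mul_pos hH hV).ne'
  have := pow_eq_zero_iff (n := 2) (by norm_num) |>.mp hnum
  linarith

lemma walk_prop (G : SimpleGraph (Fin m)) (A : Finset (Fin m))
    (hbip : ∀ i j, G.Adj i j → (i ∈ A ↔ j ∉ A))
    (w : Fin m → ℝ) (hw : ∀ i j, G.Adj i j → w i + w j = 0) (η : ℝ)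
    {a b : Fin m} (p : G.Walk a b)
    (ha : w a = if a ∈ A then η else -η) : w b = if b ∈ A then η else -η := by
  induction p with
  | nil => exact ha
  | @cons u x b hadj q ih =>
    apply ih
    have h1 := hw _ _ hadj
    have h2 := hbip _ _ hadj
    by_cases hu : u ∈ A
    · have hx : x ∉ A := h2.mp hu
      simp only [hu, if_true] at ha
      simp only [hx, if_false]
      linarith
    · have hx : x ∈ A := not_not.mp (fun hn => hu (h2.mpr hn))
      simp only [hu, if_false] at ha
      simp only [hx, if_true]
      linarith

/-- If `G` is a connected balanced-bipartite graph with bipartition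
`V = A ∪ Aᶜ`, `#A = #Aᶜ`, and `v, h` are two interior equilibria, then `h = v + η 1_A -
η 1_{Aᶜ}` for some real `η`; consequently the set of interior equilibria is exactly the
interval `{v + η(1_A - 1_{Aᶜ}) : -min_{i ∈ A} v_i < η < min_{i ∉ A} v_i}`. -/
theorem interior_equilibria_interval
    (m : ℕ) (G : SimpleGraph (Fin m)) [DecidableRel G.Adj] (hconn : G.Connected)
    (A : Finset (Fin m)) (hbip : ∀ i j, G.Adj i j → (i ∈ A ↔ j ∉ A))
    (hbal : A.card = Aᶜ.card)
    (c : ℝ) (hc0 : 0 < c) (hc1 : c < 1 / (G.edgeFinset.card : ℝ))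
    (v : Fin m → ℝ) (hv : v ∈ equilibria G c) (hvpos : ∀ i, 0 < v i)
    (h : Fin m → ℝ) (hh : h ∈ equilibria G c) (hhpos : ∀ i, 0 < h i) :
    (∃ η : ℝ, ∀ i : Fin m, h i = if i ∈ A then v i + η else v i - η) ∧
    {u : Fin m → ℝ | u ∈ equilibria G c ∧ ∀ i, 0 < u i} =
      {u : Fin m → ℝ | ∃ η : ℝ, (∀ i ∈ A, -v i < η) ∧ (∀ i ∉ A, η < v i) ∧
        ∀ i : Fin m, u i = if i ∈ A then v i + η else v i - η} := by
  classical
  have hNpos : (0:ℝ) < (G.edgeFinset.card : ℝ) := one_div_pos.mp (hc0.trans hc1)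
  obtain ⟨hvΔ, hvF⟩ := hv
  have hvS := interior_equil_sum G hNpos v hvF hvpos
  have hA : A.Nonempty := by
    rcases Finset.eq_empty_or_nonempty A with hAe | hAn
    · exfalso
      have h1 : Aᶜ.card = m := by
        rw [hAe, Finset.compl_empty, Finset.card_univ, Fintype.card_fin]
      have h2 : A.card = 0 := by rw [hAe, Finset.card_empty]
      have hm : 0 < m := by
        have hne : Nonempty (Fin m) := hconn.nonempty
        exact Fin.pos hne.some
      omega
    · exact hAn
  obtain ⟨i0, hi0⟩ := hA
  have main : ∀ u : Fin m → ℝ, u ∈ equilibria G c → (∀ i, 0 < u i) →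
      ∃ η : ℝ, ∀ i, u i = if i ∈ A then v i + η else v i - η := by
    intro u hu hupos
    obtain ⟨huΔ, huF⟩ := hu
    have hw : ∀ i j, G.Adj i j → (u i - v i) + (u j - v j) = 0 :=
      fun i j hadj => edge_diff_zero G hNpos v u hvF hvpos huF hupos hadj
    refine ⟨u i0 - v i0, fun i => ?_⟩
    have hreach := hconn.preconnected i0 i
    have hwi : (fun k => u k - v k) i = if i ∈ A then u i0 - v i0 else -(u i0 - v i0) := by
      refine hreach.elim fun p => ?_
      exact walk_prop G A hbip (fun k => u k - v k) hw (u i0 - v i0) p (by simp [hi0])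
    simp only at hwi
    by_cases hiA : i ∈ A
    · simp only [hiA, if_true] at hwi ⊢; linarith
    · simp only [hiA, if_false] at hwi ⊢; linarith
  constructor
  · exact main h hh hhpos
  · ext u
    simp only [Set.mem_setOf_eq]
    constructor
    · rintro ⟨hu, hupos⟩
      obtain ⟨η, hη⟩ := main u hu hupos
      refine ⟨η, ?_, ?_, hη⟩
      · intro i hi
        have h1 := hupos i
        rw [hη i] at h1
        simp only [hi, if_true] at h1
        linarith
      · intro i hi
        have h1 := hupos i
        rw [hη i] at h1
        simp only [hi, if_false] at h1
        linarith
    · rintro ⟨η, hη1, hη2, hη3⟩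
      have hupos : ∀ i, 0 < u i := by
        intro i
        rw [hη3 i]
        by_cases hiA : i ∈ A
        · simp only [hiA, if_true]; have := hη1 i hiA; linarith
        · simp only [hiA, if_false]; have := hη2 i hiA; linarith
      have hedge : ∀ i j, G.Adj i j → u i + u j = v i + v j := by
        intro i j hadj
        rw [hη3 i, hη3 j]
        by_cases hiA : i ∈ A
        · have hjA : j ∉ A := (hbip i j hadj).mp hiA
          simp only [hiA, hjA, if_true, if_false]; ring
        · have hjA : j ∈ A := not_not.mp (fun hn => hiA ((hbip i j hadj).mpr hn))
          simp only [hiA, hjA, if_true, if_false]; ring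
      refine ⟨⟨⟨fun i => (hupos i).le, ?_, ?_⟩, ?_⟩, hupos⟩
      · -- sum = 1
        have h1 : ∑ i, u i = ∑ i, (v i + if i ∈ A then η else -η) := by
          refine Finset.sum_congr rfl fun i _ => ?_
          rw [hη3 i]
          by_cases hiA : i ∈ A <;> simp [hiA] <;> ring
        rw [h1, Finset.sum_add_distrib, hvΔ.2.1, Finset.sum_ite]
        have hfA : Finset.univ.filter (fun i => i ∈ A) = A := by
          ext i; simp
        have hfB : Finset.univ.filter (fun i => i ∉ A) = Aᶜ := by
          ext i; simp
        rw [hfA, hfB, Finset.sum_const, Finset.sum_const, nsmul_eq_mul, nsmul_eq_mul, hbal]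
        ring
      · -- edge constraint
        intro i j hadj
        rw [hedge i j hadj]
        exact hvΔ.2.2 i j hadj
      · -- polyaF u = 0
        funext i
        simp only [polyaF, Pi.zero_apply]
        have h1 : ∑ j ∈ G.neighborFinset i, u i / (u i + u j)
            = u i * ∑ j ∈ G.neighborFinset i, 1 / (v i + v j) := by
          rw [Finset.mul_sum]
          refine Finset.sum_congr rfl fun j hj => ?_
          have hadj : G.Adj i j := (G.mem_neighborFinset i j).mp hj
          rw [hedge i j hadj]
          ring
        rw [h1, hvS i]
        have hc' : (1 / (G.edgeFinset.card : ℝ)) * (u i * (G.edgeFinset.card : ℝ)) = u i := by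
          rw [mul_comm (u i), ← mul_assoc, one_div_mul_cancel hNpos.ne', one_mul]
        rw [hc']
        ring


end GPU
end
end

section
/- Let G be a finite, connected graph and let S ⊊ [m] be a nonempty proper subset of the vertices. Let Δ_S = {v ∈ Δ : v_i = 0 if and only if i ∉ S}. Then the restriction of L to Δ_S is strictly concave: for all u, v ∈ Δ_S with u ≠ v and all t ∈ (0,1), L(tu+(1−t)v) > t L(u) + (1−t) L(v). -/
open MeasureTheory Filter Finset Topology

noncomputable section

namespace GPU

/-- For a nonempty proper subset `S ⊊ [m]` of the vertices of a
finite connected graph `G`, the restriction of `L` to the face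
`Δ_S = {v ∈ Δ : v_i = 0 ↔ i ∉ S}` is strictly concave. -/
theorem polyaL_strictly_concave_on_face
    (m : ℕ) (G : SimpleGraph (Fin m)) [DecidableRel G.Adj] (hconn : G.Connected)
    (c : ℝ) (hc0 : 0 < c) (hc1 : c < 1 / (G.edgeFinset.card : ℝ))
    (S : Finset (Fin m)) (hS₁ : S.Nonempty) (hS₂ : S ≠ Finset.univ) :
    ∀ u ∈ {x ∈ simplexDelta G c | ∀ i, x i = 0 ↔ i ∉ S},
      ∀ v ∈ {x ∈ simplexDelta G c | ∀ i, x i = 0 ↔ i ∉ S}, u ≠ v →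
        ∀ t : ℝ, 0 < t → t < 1 →
          t * polyaL G u + (1 - t) * polyaL G v < polyaL G (t • u + (1 - t) • v) := by
  intro u hu v hv huv t ht0 ht1
  obtain ⟨⟨hu0, husum, huc⟩, huS⟩ := hu
  obtain ⟨⟨hv0, hvsum, hvc⟩, hvS⟩ := hv
  have hN : 0 < (G.edgeFinset.card : ℝ) := by
    rcases lt_or_ge 0 (G.edgeFinset.card : ℝ) with h | h
    · exact h
    · exfalso
      have h0 : (G.edgeFinset.card : ℝ) = 0 := le_antisymm h (by positivity)
      rw [h0] at hc1
      simp at hc1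
      linarith
  -- there is an edge where the sums differ
  have hex : ∃ i j, G.Adj i j ∧ u i + u j ≠ v i + v j := by
    by_contra h
    push_neg at h
    apply huv
    have hi₀' : ∃ i₀, i₀ ∉ S := by
      by_contra hall
      push_neg at hall
      exact hS₂ (Finset.eq_univ_iff_forall.mpr hall)
    obtain ⟨i₀, hi₀⟩ := hi₀'
    have key : ∀ (j : Fin m) (p : G.Walk j i₀), u j = v j := by
      intro j p
      induction p with
      | nil => rw [(huS _).mpr hi₀, (hvS _).mpr hi₀]
      | cons hadj q ih =>
        have := h _ _ hadj
        have := ih hi₀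
        linarith
    funext i
    exact key i (hconn.preconnected i i₀).some
  obtain ⟨i, j, hij, hne⟩ := hex
  set w := t • u + (1 - t) • v with hw
  have hwval : ∀ a : Fin m, w a = t * u a + (1 - t) * v a := by
    intro a; simp [hw, Pi.add_apply, Pi.smul_apply, smul_eq_mul]
  -- per-edge functions
  set Lf : (Fin m → ℝ) → Sym2 (Fin m) → ℝ :=
    fun x => Sym2.lift ⟨fun i j => Real.log (x i + x j), fun i j => by simp [add_comm]⟩
    with hLf
  have hLmk : ∀ (x : Fin m → ℝ) (a b : Fin m), Lf x s(a, b) = Real.log (x a + x b) := by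
    intro x a b; simp [hLf]
  have hedge : ∀ e ∈ G.edgeFinset,
      t * Lf u e + (1 - t) * Lf v e ≤ Lf w e := by
    intro e he
    induction e using Sym2.ind with
    | _ a b =>
      rw [SimpleGraph.mem_edgeFinset, SimpleGraph.mem_edgeSet] at he
      rw [hLmk, hLmk, hLmk]
      have hu' : (0 : ℝ) < u a + u b := lt_of_lt_of_le hc0 (huc a b he)
      have hv' : (0 : ℝ) < v a + v b := lt_of_lt_of_le hc0 (hvc a b he)
      have := strictConcaveOn_log_Ioi.concaveOn.2 (Set.mem_Ioi.mpr hu')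
        (Set.mem_Ioi.mpr hv') (le_of_lt ht0) (by linarith : (0:ℝ) ≤ 1 - t) (by ring)
      simp only [smul_eq_mul] at this
      calc t * Real.log (u a + u b) + (1 - t) * Real.log (v a + v b)
          ≤ Real.log (t * (u a + u b) + (1 - t) * (v a + v b)) := this
        _ = Real.log (w a + w b) := by rw [hwval, hwval]; ring_nf
  have hstrict : ∃ e ∈ G.edgeFinset,
      t * Lf u e + (1 - t) * Lf v e < Lf w e := by
    refine ⟨s(i, j), ?_, ?_⟩
    · rw [SimpleGraph.mem_edgeFinset, SimpleGraph.mem_edgeSet]; exact hij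
    · rw [hLmk, hLmk, hLmk]
      have hu' : (0 : ℝ) < u i + u j := lt_of_lt_of_le hc0 (huc i j hij)
      have hv' : (0 : ℝ) < v i + v j := lt_of_lt_of_le hc0 (hvc i j hij)
      have := strictConcaveOn_log_Ioi.2 (Set.mem_Ioi.mpr hu')
        (Set.mem_Ioi.mpr hv') hne ht0 (by linarith : (0:ℝ) < 1 - t) (by ring)
      simp only [smul_eq_mul] at this
      calc t * Real.log (u i + u j) + (1 - t) * Real.log (v i + v j)
          < Real.log (t * (u i + u j) + (1 - t) * (v i + v j)) := this
        _ = Real.log (w i + w j) := by rw [hwval, hwval]; ring_nf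
  have hsum : t * ∑ e ∈ G.edgeFinset, Lf u e + (1 - t) * ∑ e ∈ G.edgeFinset, Lf v e
      < ∑ e ∈ G.edgeFinset, Lf w e := by
    have := Finset.sum_lt_sum hedge hstrict
    calc t * ∑ e ∈ G.edgeFinset, Lf u e + (1 - t) * ∑ e ∈ G.edgeFinset, Lf v e
        = ∑ e ∈ G.edgeFinset, (t * Lf u e + (1 - t) * Lf v e) := by
          rw [Finset.sum_add_distrib, Finset.mul_sum, Finset.mul_sum]
      _ < ∑ e ∈ G.edgeFinset, Lf w e := this
  have hwsum : ∑ a, w a = t * ∑ a, u a + (1 - t) * ∑ a, v a := by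
    simp only [hwval]
    rw [Finset.sum_add_distrib, Finset.mul_sum, Finset.mul_sum]
  unfold polyaL
  have hmul : (1 / (G.edgeFinset.card : ℝ)) *
      (t * ∑ e ∈ G.edgeFinset, Lf u e + (1 - t) * ∑ e ∈ G.edgeFinset, Lf v e)
      < (1 / (G.edgeFinset.card : ℝ)) * ∑ e ∈ G.edgeFinset, Lf w e :=
    mul_lt_mul_of_pos_left hsum (by positivity)
  simp only [hLf] at hmul
  rw [hwsum]
  ring_nf
  ring_nf at hmul
  linarith

end GPU
end
end

section
/- Let G be a finite, connected, r-regular bipartite graph with bipartition V=A∪B, and let v ∈ Ω, where Ω = {(x_1,…,x_m) : there exist p,q ≥ 0 with p+q = 2/m such that x_i = p for all i∈A and x_i = q for all i∈B}. Let l ∈ ℝ^m be the vector with l_i = 1 for i∈A and l_i = −1 for i∈B. Then JF(v)·l = 0, i.e., the derivative of F at v in the direction l vanishes; in particular 0 is an eigenvalue of JF(v) with eigenvector l. -/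
open MeasureTheory Filter Finset Topology

noncomputable section

namespace GPU

/-- Let `G` be a finite, connected, `r`-regular bipartite graph with
bipartition `V = A ∪ Aᶜ` (both parts nonempty), let `v ∈ Ω` (i.e. `v = p` on `A`,
`v = q` on `Aᶜ` with `p, q ≥ 0`, `p + q = 2/m`), and let `l` be the vector equal to `1`
on `A` and `-1` on `Aᶜ`. Then `JF(v) · l = 0`; in particular `0` is an eigenvalue of
`JF(v)` with eigenvector `l` (note `l ≠ 0`). -/
theorem jacobian_kernel_direction_regular_bipartite
    (m : ℕ) (G : SimpleGraph (Fin m)) [DecidableRel G.Adj] (hconn : G.Connected)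
    (r : ℕ) (hreg : G.IsRegularOfDegree r)
    (A : Finset (Fin m)) (hA : A.Nonempty) (hAc : Aᶜ.Nonempty)
    (hbip : ∀ i j, G.Adj i j → (i ∈ A ↔ j ∉ A))
    (p q : ℝ) (hp : 0 ≤ p) (hq : 0 ≤ q) (hpq : p + q = 2 / m)
    (v : Fin m → ℝ) (hv : ∀ i, v i = if i ∈ A then p else q)
    (l : Fin m → ℝ) (hl : ∀ i, l i = if i ∈ A then 1 else -1) :
    (polyaJacobian G v).mulVec l = 0 ∧ l ≠ 0 := by
  classical
  obtain ⟨i₀, hi₀⟩ := hA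
  obtain ⟨k₀, hk₀⟩ := hAc
  have hm : 0 < m := Fin.pos i₀
  have hm' : (0 : ℝ) < (m : ℝ) := by exact_mod_cast hm
  have hm0 : (m : ℝ) ≠ 0 := hm'.ne'
  set s : ℝ := p + q with hs_def
  have hs : 0 < s := by rw [hpq]; exact div_pos two_pos hm' 
  have hvadj : ∀ i j, G.Adj i j → v i + v j = s := by
    intro i j hij
    have h := hbip i j hij
    by_cases hi : i ∈ A
    · rw [hv i, hv j, if_pos hi, if_neg (h.mp hi)]
    · have hj : j ∈ A := by by_contra hj; exact hi (h.mpr hj)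
      rw [hv i, hv j, if_neg hi, if_pos hj, add_comm]
  have hladj : ∀ i j, G.Adj i j → l i + l j = 0 := by
    intro i j hij
    have h := hbip i j hij
    by_cases hi : i ∈ A
    · rw [hl i, hl j, if_pos hi, if_neg (h.mp hi)]; ring
    · have hj : j ∈ A := by by_contra hj; exact hi (h.mpr hj)
      rw [hl i, hl j, if_neg hi, if_pos hj]; ring
  have hhand : m * r = 2 * G.edgeFinset.card := by
    have h := G.sum_degrees_eq_twice_card_edges
    rwa [Finset.sum_congr rfl (fun i _ => hreg i), Finset.sum_const, card_univ,
      Fintype.card_fin, smul_eq_mul] at h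
  have hr : 0 < r := by
    have hne : i₀ ≠ k₀ := by
      intro h; rw [h] at hi₀; exact (Finset.mem_compl.mp hk₀) hi₀
    obtain ⟨w⟩ := hconn.preconnected i₀ k₀
    have hex : ∃ j, G.Adj i₀ j := by
      cases w with
      | nil => exact absurd rfl hne
      | cons h _ => exact ⟨_, h⟩
    have := (G.degree_pos_iff_exists_adj i₀).mpr hex
    rwa [hreg i₀] at this
  have hNpos : 0 < G.edgeFinset.card := by
    have := Nat.mul_pos hm hr; omega
  have hN : (0 : ℝ) < (G.edgeFinset.card : ℝ) := by exact_mod_cast hNpos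
  have hNs : (G.edgeFinset.card : ℝ) * s = r := by
    have h2 : (2 : ℝ) * (G.edgeFinset.card : ℝ) = (m : ℝ) * r := by
      exact_mod_cast hhand.symm
    rw [hpq, mul_div_assoc', div_eq_iff hm0]
    linarith
  constructor
  · funext i
    show (polyaJacobian G v).mulVec l i = 0
    set c : ℝ := 1 / (G.edgeFinset.card : ℝ) with hc
    set P : Fin m → ((Fin m → ℝ) →L[ℝ] ℝ) :=
      fun k => ContinuousLinearMap.proj (R := ℝ) (φ := fun _ : Fin m => ℝ) k with hP
    set D : (Fin m → ℝ) →L[ℝ] ℝ :=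
      -(P i) + c • ∑ j ∈ G.neighborFinset i,
        (v i • ((-((v i + v j) ^ 2)⁻¹) • (P i + P j)) + (v i + v j)⁻¹ • P i)
      with hD
    have hterm : ∀ j ∈ G.neighborFinset i,
        HasFDerivAt (fun x : Fin m → ℝ => x i * (x i + x j)⁻¹)
          (v i • ((-((v i + v j) ^ 2)⁻¹) • (P i + P j)) + (v i + v j)⁻¹ • P i) v := by
      intro j hj
      have hadj : G.Adj i j := by rwa [SimpleGraph.mem_neighborFinset] at hj
      have hden : v i + v j ≠ 0 := by rw [hvadj i j hadj]; exact hs.ne'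
      have h1 : HasFDerivAt (fun x : Fin m → ℝ => x i + x j) (P i + P j) v :=
        (hasFDerivAt_apply i v).add (hasFDerivAt_apply j v)
      have h2 : HasFDerivAt (fun x : Fin m → ℝ => (x i + x j)⁻¹)
          ((-((v i + v j) ^ 2)⁻¹) • (P i + P j)) v :=
        (hasDerivAt_inv hden).comp_hasFDerivAt v h1
      exact (hasFDerivAt_apply i v).mul h2
    have hsum := HasFDerivAt.sum hterm
    have hDer : HasFDerivAt (fun x => polyaF G x i) D v := by
      have := ((hasFDerivAt_apply i v).neg).add (hsum.const_mul c)
      rw [hD]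
      refine this.congr_of_eventuallyEq ?_
      filter_upwards with x
      simp [polyaF, div_eq_mul_inv, hc]
    have hf : fderiv ℝ (fun x => polyaF G x i) v = D := hDer.fderiv
    have hgoal : (polyaJacobian G v).mulVec l i = D l := by
      simp only [Matrix.mulVec, dotProduct, polyaJacobian, Matrix.of_apply, hf]
      calc ∑ j, D (Pi.single j 1) * l j = ∑ j, D (Pi.single j (l j)) := by
            refine Finset.sum_congr rfl fun j _ => ?_
            have hsingle : (Pi.single j (l j) : Fin m → ℝ)
                = l j • (Pi.single j (1 : ℝ) : Fin m → ℝ) := by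
              funext k; by_cases h : k = j <;> simp [Pi.single_apply, h]
            rw [hsingle, D.map_smul, smul_eq_mul, mul_comm]
        _ = D (∑ j, Pi.single j (l j)) := (map_sum D _ _).symm
        _ = D l := by rw [Finset.univ_sum_single]
    rw [hgoal]
    have hDl : D l = -(l i) + c * ∑ j ∈ G.neighborFinset i,
        (v i * ((-((v i + v j) ^ 2)⁻¹) * (l i + l j)) + (v i + v j)⁻¹ * l i) := by
      simp [hD, hP, ContinuousLinearMap.sum_apply, ContinuousLinearMap.proj_apply,
        mul_add, smul_eq_mul]
    rw [hDl]
    have hterms : ∑ j ∈ G.neighborFinset i,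
        (v i * ((-((v i + v j) ^ 2)⁻¹) * (l i + l j)) + (v i + v j)⁻¹ * l i)
        = (r : ℝ) * (s⁻¹ * l i) := by
      have he : ∀ j ∈ G.neighborFinset i,
          (v i * ((-((v i + v j) ^ 2)⁻¹) * (l i + l j)) + (v i + v j)⁻¹ * l i)
            = s⁻¹ * l i := by
        intro j hj
        have hadj : G.Adj i j := by rwa [SimpleGraph.mem_neighborFinset] at hj
        rw [hladj i j hadj, hvadj i j hadj]; ring
      rw [Finset.sum_congr rfl he, Finset.sum_const,
        G.card_neighborFinset_eq_degree, hreg i, nsmul_eq_mul]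
    have hkey : c * ((r : ℝ) * (s⁻¹ * l i)) = l i := by
      have h1 : (r : ℝ) * s⁻¹ = (G.edgeFinset.card : ℝ) := by
        rw [← hNs, mul_assoc, mul_inv_cancel₀ hs.ne', mul_one]
      have h2 : c * ((r : ℝ) * (s⁻¹ * l i)) = (c * ((r : ℝ) * s⁻¹)) * l i := by ring
      rw [h2, h1, hc, one_div, inv_mul_cancel₀ hN.ne', one_mul]
    rw [hterms]
    linarith [hkey]
  · intro h
    have := congrFun h i₀
    simp [hl i₀, hi₀] at this

end GPU
end
end
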